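/- arXiv:2007.09862 — 4 statements merged into one kernel-verified Lean document; each statement's English description precedes it below -/
import Mathlib

section
/- If 2√2/3 < a < √2, then the open disc {w ∈ ℂ : |w - a| < √2 - a} is contained in the region {w ∈ ℂ : |w² - 1| < 1} bounded by the lemniscate of Bernoulli. -/
/-!
Writing `x = Re w` and `ρ = ‖w‖²`, the lemniscate region is `ρ² + 2ρ < 4x²`, and the disc
gives `ρ < T(x) := 2 + 2a(x - √2)` with `2a - √2 < x < √2`. Since `ρ ↦ ρ² + 2ρ` is
increasing, it suffices that `T² + 2T ≤ 4x²` on that interval. The difference factors as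
`4(√2 - x) L(x)` with `L` affine, and `L` is nonnegative at both endpoints:
`L(√2) = 3a - 2√2` and `L(2a - √2) = a(√2 a - 1)²`.
-/

open Real

namespace Complex

theorem norm_sub_one_lt_one_iff (z : ℂ) : ‖z - 1‖ < 1 ↔ ‖z‖ ^ 2 < 2 * z.re := by
  have h : ‖z - 1‖ ^ 2 = ‖z‖ ^ 2 - 2 * z.re + 1 := by
    simp only [Complex.sq_norm, normSq_sub, map_one, mul_one]
    ring
  rw [← sq_lt_one_iff₀ (norm_nonneg _), h]
  constructor <;> intro <;> linarith

theorem norm_sq_lt_of_norm_sub_ofReal_lt {w : ℂ} {c r : ℝ} (h : ‖w - c‖ < r) :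
    ‖w‖ ^ 2 < 2 * c * w.re + r ^ 2 - c ^ 2 := by
  have hsq : ‖w - c‖ ^ 2 = ‖w‖ ^ 2 - 2 * c * w.re + c ^ 2 := by
    simp only [Complex.sq_norm, normSq_sub, normSq_ofReal, conj_ofReal, mul_re, ofReal_re,
      ofReal_im, mul_zero, sub_zero]
    ring
  have := pow_lt_pow_left₀ h (norm_nonneg _) two_ne_zero
  linarith

end Complex

theorem lemniscate_linear_factor_nonneg {a x : ℝ} (ha₁ : 2 * √2 / 3 < a) (ha₂ : a < √2)
    (hx₁ : 2 * a - √2 ≤ x) (hx₂ : x ≤ √2) :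
    0 ≤ (a ^ 2 - 1) * x + 3 * a - √2 * (1 + a ^ 2) := by
  have hs : √2 ^ 2 = 2 := sq_sqrt zero_le_two
  have hright : 0 ≤ (x - (2 * a - √2)) * (3 * a - 2 * √2) :=
    mul_nonneg (by linarith) (by linarith)
  have hleft : 0 ≤ (√2 - x) * (a * (√2 * a - 1) ^ 2) :=
    mul_nonneg (by linarith) (mul_nonneg (by linarith [sqrt_nonneg 2]) (sq_nonneg _))
  -- affine interpolation between the endpoint values `3a - 2√2` and `a(√2 a - 1)²`
  have hinterp : 2 * (√2 - a) * ((a ^ 2 - 1) * x + 3 * a - √2 * (1 + a ^ 2)) =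
      (x - (2 * a - √2)) * (3 * a - 2 * √2) + (√2 - x) * (a * (√2 * a - 1) ^ 2) := by
    linear_combination a ^ 3 * (x - √2) * hs
  have : 0 < 2 * (√2 - a) := by linarith
  nlinarith

theorem lemniscate_quadratic_le {a x : ℝ} (ha₁ : 2 * √2 / 3 < a) (ha₂ : a < √2)
    (hx₁ : 2 * a - √2 ≤ x) (hx₂ : x ≤ √2) :
    (2 + 2 * a * (x - √2)) ^ 2 + 2 * (2 + 2 * a * (x - √2)) ≤ 4 * x ^ 2 := by
  have hs : √2 ^ 2 = 2 := sq_sqrt zero_le_two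
  have hfactor : 4 * x ^ 2 - ((2 + 2 * a * (x - √2)) ^ 2 + 2 * (2 + 2 * a * (x - √2))) =
      4 * (√2 - x) * ((a ^ 2 - 1) * x + 3 * a - √2 * (1 + a ^ 2)) := by
    linear_combination 4 * hs
  have := mul_nonneg (mul_nonneg zero_le_four (sub_nonneg.2 hx₂))
    (lemniscate_linear_factor_nonneg ha₁ ha₂ hx₁ hx₂)
  linarith

theorem stmt_6 (a : ℝ) (ha1 : 2 * Real.sqrt 2 / 3 < a) (ha2 : a < Real.sqrt 2) :
    {w : ℂ | ‖w - (a:ℂ)‖ < Real.sqrt 2 - a} ⊆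
      {w : ℂ | ‖w^2 - 1‖ < 1} := by
  intro w hw
  simp only [Set.mem_ofPred_eq] at hw ⊢
  have hs : √2 ^ 2 = 2 := sq_sqrt zero_le_two
  have hre : |w.re - a| < √2 - a := by
    simpa using (Complex.abs_re_le_norm (w - a)).trans_lt hw
  have hρ : ‖w‖ ^ 2 < 2 + 2 * a * (w.re - √2) := by
    have := Complex.norm_sq_lt_of_norm_sub_ofReal_lt hw
    linear_combination this + hs
  obtain ⟨hre₁, hre₂⟩ := abs_lt.1 hre
  have hT := lemniscate_quadratic_le ha1 ha2 (x := w.re) (by linarith) (by linarith)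
  have hmono : (‖w‖ ^ 2) ^ 2 + 2 * ‖w‖ ^ 2 <
      (2 + 2 * a * (w.re - √2)) ^ 2 + 2 * (2 + 2 * a * (w.re - √2)) := by
    nlinarith [sq_nonneg ‖w‖]
  have him := Complex.sq_norm_sub_sq_re w
  rw [Complex.norm_sub_one_lt_one_iff, norm_pow, pow_two w, Complex.mul_re]
  linarith
end

section
/- If 1/3 < a ≤ 1, then the open disc {w ∈ ℂ : |w - a| < a - 1/3} is contained in the nephroid region Ω_Ne = {u + iv : ((u - 1)² + v² - 4/9)³ - 4v²/3 < 0}. -/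
/-! The disc about `a` lies in the disc `|w - 1| < 2/3`, since `(a - 1/3) + |1 - a| = 2/3` for
`a ≤ 1`. On the latter disc the cubed factor is negative, while `-(4/3) v² ≤ 0`. -/

open Metric

def nephroidRegion : Set ℂ :=
  {w | ((w.re - 1) ^ 2 + w.im ^ 2 - 4 / 9) ^ 3 - (4 / 3) * w.im ^ 2 < 0}

theorem ball_subset_ball_one_two_thirds {a : ℝ} (ha : a ≤ 1) :
    ball (a : ℂ) (a - 1 / 3) ⊆ ball 1 (2 / 3) := by
  refine ball_subset_ball' ?_
  rw [Complex.dist_eq, ← Complex.ofReal_one, ← Complex.ofReal_sub, Complex.norm_real,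
    Real.norm_eq_abs, abs_of_nonpos (by linarith)]
  linarith

theorem ball_one_two_thirds_subset_nephroidRegion : ball (1 : ℂ) (2 / 3) ⊆ nephroidRegion := by
  intro w hw
  have hdisc : (w.re - 1) ^ 2 + w.im ^ 2 < 4 / 9 := by
    have hnorm : ‖w - 1‖ ^ 2 < (2 / 3) ^ 2 :=
      pow_lt_pow_left₀ (mem_ball_iff_norm.mp hw) (norm_nonneg _) two_ne_zero
    rw [Complex.sq_norm, Complex.normSq_apply] at hnorm
    norm_num at hnorm
    linarith
  have hcube : ((w.re - 1) ^ 2 + w.im ^ 2 - 4 / 9) ^ 3 < 0 :=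
    Odd.pow_neg (by decide) (by linarith)
  rw [nephroidRegion, Set.mem_ofPred_eq]
  linarith [sq_nonneg w.im]

theorem stmt_8_general (a : ℝ) (ha2 : a ≤ 1) :
    {w : ℂ | ‖w - (a:ℂ)‖ < a - 1/3} ⊆
      {w : ℂ | ((w.re - 1)^2 + w.im^2 - 4/9)^3 - (4/3) * w.im^2 < 0} := fun _ hw =>
  ball_one_two_thirds_subset_nephroidRegion <|
    ball_subset_ball_one_two_thirds ha2 (mem_ball_iff_norm.mpr hw)

theorem stmt_8 (a : ℝ) (ha1 : 1/3 < a) (ha2 : a ≤ 1) :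
    {w : ℂ | ‖w - (a:ℂ)‖ < a - 1/3} ⊆
      {w : ℂ | ((w.re - 1)^2 + w.im^2 - 4/9)^3 - (4/3) * w.im^2 < 0} :=
  stmt_8_general a ha2
end

section
/- If a is real with |a - 1| ≤ √2 - 1, then the open disc {w ∈ ℂ : |w - a| < 1 - |√2 - a|} is contained in the lune region {w ∈ ℂ : |w² - 1| < 2|w|}. -/
/-!
The lune is the region between the circles `|w - 1| = √2` and `|w + 1| = √2`: by the identity
`|w² - 1|² - 4|w|² = (|w - 1|² - 2)(|w + 1|² - 2)` it consists of the points lying inside exactly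
one of the two discs. The disc centred at `a` of radius `1 - (√2 - a)` lies inside `|w - 1| < √2`
and touches the circle `|w + 1| = √2` from outside.
-/

open Complex

/-- Follows from `|w - 1| |w + 1| = |w² - 1|` and the parallelogram law. -/
theorem norm_sq_sub_one_sq_sub_sq_two_mul_norm (w : ℂ) :
    ‖w ^ 2 - 1‖ ^ 2 - (2 * ‖w‖) ^ 2 = (‖w - 1‖ ^ 2 - 2) * (‖w + 1‖ ^ 2 - 2) := by
  have hprod : ‖w - 1‖ * ‖w + 1‖ = ‖w ^ 2 - 1‖ := by
    rw [← norm_mul]; ring_nf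
  have hpar := parallelogram_law_with_norm ℝ w 1
  rw [norm_one] at hpar
  linear_combination -(‖w - 1‖ * ‖w + 1‖ + ‖w ^ 2 - 1‖) * hprod + 2 * hpar

theorem norm_sq_sub_one_lt_two_mul_norm {w : ℂ} (hminus : ‖w - 1‖ < √2) (hplus : √2 < ‖w + 1‖) :
    ‖w ^ 2 - 1‖ < 2 * ‖w‖ := by
  have hminus_sq : ‖w - 1‖ ^ 2 < 2 := by
    rw [← Real.sq_sqrt zero_le_two]; gcongr
  have hplus_sq : 2 < ‖w + 1‖ ^ 2 := by
    rw [← Real.sq_sqrt zero_le_two]; gcongr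
  have hsq : ‖w ^ 2 - 1‖ ^ 2 < (2 * ‖w‖) ^ 2 := by
    have := norm_sq_sub_one_sq_sub_sq_two_mul_norm w
    nlinarith
  exact lt_of_pow_lt_pow_left₀ 2 (by positivity) hsq

theorem stmt_9 (a : ℝ) (ha : |a - 1| ≤ Real.sqrt 2 - 1) :
    {w : ℂ | ‖w - (a:ℂ)‖ < 1 - |Real.sqrt 2 - a|} ⊆
      {w : ℂ | ‖w^2 - 1‖ < 2 * ‖w‖} := by
  intro w hw
  obtain ⟨ha_lower, ha_upper⟩ := abs_le.mp ha
  rw [Set.mem_ofPred_eq, abs_of_nonneg (by linarith), ← dist_eq_norm] at hw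
  apply norm_sq_sub_one_lt_two_mul_norm
  · have hdist : dist (a : ℂ) 1 = |a - 1| := by
      rw [← ofReal_one, isometry_ofReal.dist_eq, Real.dist_eq]
    rw [← dist_eq_norm]
    have := dist_triangle w a 1
    linarith [le_abs_self (a - 1), neg_abs_le (a - 1)]
  · have hdist : dist (a : ℂ) (-1) = a + 1 := by
      rw [← ofReal_one, ← ofReal_neg, isometry_ofReal.dist_eq, Real.dist_eq, sub_neg_eq_add,
        abs_of_nonneg (by linarith [dist_nonneg (x := w) (y := a), Real.sqrt_nonneg 2])]
    rw [← sub_neg_eq_add, ← dist_eq_norm]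
    have := dist_triangle (a : ℂ) w (-1)
    linarith [dist_comm w (a : ℂ)]
end

section
/- Suppose p is analytic on the open unit disc with p(0) = 1 and Re p(z) > α there, where 0 ≤ α < 1. Then for every z with |z| ≤ r < 1, |z p'(z)/p(z)| ≤ 2(1-α)r / ((1-r)(1+(1-2α)r)). -/
/-!
Since `Re p > α` and `p 0 = 1`, the function `w = (p - 1) / (p + β)` with `β = 1 - 2α` maps the
disc into itself and fixes `0`, so `p = (1 + β w) / (1 - w)` and
`z p' / p = (1 + β) z w' / ((1 - w) (1 + β w))`. The Schwarz lemma gives `|w z| ≤ |z|`, the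
Schwarz–Pick lemma (obtained by composing `w` with disc automorphisms) gives
`|w'| ≤ (1 - |w|²) / (1 - |z|²)`, and `|1 - w| |1 + β w| ≥ (1 - |w|) (1 + β |w|)`. The resulting
bound `(1 + β) |z| (1 + |w|) / ((1 - |z|²) (1 + β |w|))` increases with `|w|` and then with `|z|`,
so it is largest at `|w| = |z| = r`.
-/

open Metric Set Complex ComplexConjugate Filter Topology

theorem normSq_one_add_conj_mul_sub_normSq_add (u v : ℂ) :
    normSq (1 + conj u * v) - normSq (u + v) = (1 - normSq u) * (1 - normSq v) := by
  simp only [normSq_apply, add_re, add_im, mul_re, mul_im, conj_re, conj_im, one_re, one_im]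
  ring

theorem norm_add_lt_norm_one_add_conj_mul {u v : ℂ} (hu : ‖u‖ < 1) (hv : ‖v‖ < 1) :
    ‖u + v‖ < ‖1 + conj u * v‖ := by
  have hu' : normSq u < 1 := by rw [normSq_eq_norm_sq]; nlinarith [norm_nonneg u]
  have hv' : normSq v < 1 := by rw [normSq_eq_norm_sq]; nlinarith [norm_nonneg v]
  have h := normSq_one_add_conj_mul_sub_normSq_add u v
  rw [norm_def, norm_def]
  exact Real.sqrt_lt_sqrt (normSq_nonneg _) (by nlinarith)

theorem one_add_conj_mul_ne_zero {u v : ℂ} (hu : ‖u‖ < 1) (hv : ‖v‖ < 1) :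
    1 + conj u * v ≠ 0 :=
  norm_pos_iff.mp <| (norm_nonneg _).trans_lt (norm_add_lt_norm_one_add_conj_mul hu hv)

theorem one_sub_mul_conj (z : ℂ) : 1 - z * conj z = ((1 - ‖z‖ ^ 2 : ℝ) : ℂ) := by
  rw [mul_conj, normSq_eq_norm_sq]; push_cast; ring

noncomputable def discMobius (a z : ℂ) : ℂ := (z + a) / (1 + conj a * z)

namespace discMobius

variable {a : ℂ}

@[simp]
theorem apply_zero (a : ℂ) : discMobius a 0 = a := by simp [discMobius]

@[simp]
theorem neg_apply_self (a : ℂ) : discMobius (-a) a = 0 := by simp [discMobius]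

theorem mapsTo_ball (ha : ‖a‖ < 1) : MapsTo (discMobius a) (ball 0 1) (ball 0 1) := by
  intro z hz
  rw [mem_ball_zero_iff] at hz ⊢
  rw [discMobius, norm_div, div_lt_one (norm_pos_iff.mpr (one_add_conj_mul_ne_zero ha hz)),
    add_comm]
  exact norm_add_lt_norm_one_add_conj_mul ha hz

theorem differentiableOn (ha : ‖a‖ < 1) : DifferentiableOn ℂ (discMobius a) (ball 0 1) :=
  DifferentiableOn.div (by fun_prop) (by fun_prop)
    fun _ hz ↦ one_add_conj_mul_ne_zero ha (mem_ball_zero_iff.mp hz)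

theorem hasDerivAt {z : ℂ} (hz : 1 + conj a * z ≠ 0) :
    HasDerivAt (discMobius a) ((1 - a * conj a) / (1 + conj a * z) ^ 2) z := by
  refine (((hasDerivAt_id z).add_const a).div
    (((hasDerivAt_id z).const_mul (conj a)).const_add 1) hz).congr_deriv ?_
  simp only [id, mul_one]
  ring

end discMobius

theorem norm_deriv_mul_le_of_mapsTo_ball {f : ℂ → ℂ} (hd : DifferentiableOn ℂ f (ball 0 1))
    (hf : MapsTo f (ball 0 1) (ball 0 1)) {a : ℂ} (ha : ‖a‖ < 1) :
    ‖deriv f a‖ * (1 - ‖a‖ ^ 2) ≤ 1 - ‖f a‖ ^ 2 := by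
  set b := f a
  have hb : ‖b‖ < 1 := mem_ball_zero_iff.mp (hf (mem_ball_zero_iff.mpr ha))
  have hb' : ‖-b‖ < 1 := by rwa [norm_neg]
  have hmaps := hf.comp (discMobius.mapsTo_ball ha)
  set F := discMobius (-b) ∘ f ∘ discMobius a
  have hFd : DifferentiableOn ℂ F (ball 0 1) :=
    (discMobius.differentiableOn hb').comp
      (hd.comp (discMobius.differentiableOn ha) (discMobius.mapsTo_ball ha)) hmaps
  have hF0 : F 0 = 0 := by simp [F, b]
  have hF' : HasDerivAt F
      ((1 - b * conj b) / (1 - b * conj b) ^ 2 * (deriv f a * (1 - a * conj a))) 0 := by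
    have hfa : HasDerivAt f (deriv f a) (discMobius a 0) := by
      rw [discMobius.apply_zero]
      exact (hd.differentiableAt (isOpen_ball.mem_nhds (mem_ball_zero_iff.mpr ha))).hasDerivAt
    have hm_b := discMobius.hasDerivAt (one_add_conj_mul_ne_zero hb' hb)
    have hm_a := discMobius.hasDerivAt (a := a) (z := 0) (by simp)
    refine (hm_b.comp_of_eq 0 (hfa.comp 0 hm_a) (by simp [b])).congr_deriv ?_
    simp only [map_neg, mul_zero, add_zero, one_pow, div_one]
    ring
  have hF1 := norm_deriv_le_one_of_mapsTo_ball hFd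
    (by rw [hF0]; exact ((discMobius.mapsTo_ball hb').comp hmaps).mono_right ball_subset_closedBall)
    one_pos
  have hpos : 0 < 1 - ‖b‖ ^ 2 := by nlinarith [norm_nonneg b]
  have hF'0 : deriv F 0 = deriv f a * ((1 - ‖a‖ ^ 2) / (1 - ‖b‖ ^ 2) : ℝ) := by
    rw [hF'.deriv, one_sub_mul_conj, one_sub_mul_conj]
    have : ((1 - ‖b‖ ^ 2 : ℝ) : ℂ) ≠ 0 := by exact_mod_cast hpos.ne'
    push_cast at this ⊢
    field_simp
  have hpa : 0 ≤ 1 - ‖a‖ ^ 2 := by nlinarith [norm_nonneg a]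
  rw [hF'0, norm_mul, norm_real, Real.norm_of_nonneg (div_nonneg hpa hpos.le), mul_div_assoc',
    div_le_one hpos] at hF1
  exact hF1

theorem mul_le_norm_one_sub_mul_norm_one_add_mul {β : ℝ} (hβ : -1 ≤ β) (hβ' : β ≤ 1) {u : ℂ}
    (hu : ‖u‖ ≤ 1) : (1 - ‖u‖) * (1 + β * ‖u‖) ≤ ‖1 - u‖ * ‖1 + β * u‖ := by
  set s := ‖u‖
  set x := u.re
  have hs : 0 ≤ s := norm_nonneg u
  have hxs : |x| ≤ s := abs_re_le_norm u
  have hx : x ≤ s := le_of_abs_le hxs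
  have hx' : -s ≤ x := neg_le_of_abs_le hxs
  have hA : ‖1 - u‖ ^ 2 = 1 - 2 * x + s ^ 2 := by
    rw [Complex.sq_norm, Complex.sq_norm, normSq_apply, normSq_apply]
    simp only [sub_re, sub_im, one_re, one_im, x]
    ring
  have hB : ‖1 + β * u‖ ^ 2 = 1 + 2 * β * x + β ^ 2 * s ^ 2 := by
    rw [Complex.sq_norm, Complex.sq_norm, normSq_apply, normSq_apply]
    simp only [add_re, add_im, mul_re, mul_im, one_re, one_im, ofReal_re, ofReal_im, x]
    ring
  -- the difference of the squares factors as `2 (s - x) (2 β (x + s) + (1 - β) (1 - β s²))`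
  have hfac : 0 ≤ 2 * β * (x + s) + (1 - β) * (1 - β * s ^ 2) := by
    rcases le_or_gt 0 β with hb | hb
    · have h1 : 0 ≤ 2 * β * (x + s) := mul_nonneg (by positivity) (by linarith)
      have h2 : β * s ^ 2 ≤ 1 := mul_le_one₀ hβ' (by positivity) (pow_le_one₀ hs hu)
      nlinarith [mul_nonneg (sub_nonneg.2 hβ') (sub_nonneg.2 h2)]
    · nlinarith [mul_nonneg (neg_nonneg.2 hb.le) (sq_nonneg ((1 - β) * s - 2)),
        mul_nonneg (sub_nonneg.2 hx) (neg_nonneg.2 hb.le)]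
  have hsq : ((1 - s) * (1 + β * s)) ^ 2 ≤ (‖1 - u‖ * ‖1 + β * u‖) ^ 2 := by
    rw [mul_pow ‖1 - u‖, hA, hB]
    nlinarith [mul_nonneg (sub_nonneg.2 hx) hfac]
  exact abs_le_of_sq_le_sq' hsq (by positivity) |>.2

theorem one_add_div_one_add_mul_le {β s ρ : ℝ} (hβ : β ≤ 1) (hs : 0 < 1 + β * s)
    (hρ : 0 < 1 + β * ρ) (hsρ : s ≤ ρ) : (1 + s) / (1 + β * s) ≤ (1 + ρ) / (1 + β * ρ) := by
  rw [div_le_div_iff₀ hs hρ]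
  nlinarith [mul_nonneg (sub_nonneg.2 hβ) (sub_nonneg.2 hsρ)]

theorem div_one_sub_mul_one_add_mul_le {β ρ r : ℝ} (hβ : -1 ≤ β) (hρ : 0 ≤ ρ) (hρr : ρ ≤ r)
    (hr : r < 1) : ρ / ((1 - ρ) * (1 + β * ρ)) ≤ r / ((1 - r) * (1 + β * r)) := by
  have hρ1 : ρ < 1 := hρr.trans_lt hr
  have hβρ : 0 < 1 + β * ρ := by nlinarith
  have hβr : 0 < 1 + β * r := by nlinarith
  have hβρr : 0 ≤ 1 + β * ρ * r := by
    nlinarith [mul_le_one₀ hρ1.le (hρ.trans hρr) hr.le, mul_nonneg hρ (hρ.trans hρr)]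
  rw [div_le_div_iff₀ (by positivity) (mul_pos (by linarith) hβr)]
  -- the difference of the two sides is `(r - ρ) (1 + β ρ r)`
  nlinarith [mul_nonneg (sub_nonneg.2 hρr) hβρr]

theorem hasDerivAt_one_add_mul_div_one_sub {w : ℂ → ℂ} {w' c z : ℂ} (hw : HasDerivAt w w' z)
    (hz : w z ≠ 1) :
    HasDerivAt (fun ζ ↦ (1 + c * w ζ) / (1 - w ζ)) ((1 + c) * w' / (1 - w z) ^ 2) z := by
  refine ((hw.const_mul c).const_add 1).div (hw.const_sub 1) (sub_ne_zero.2 hz.symm)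
    |>.congr_deriv ?_
  ring

theorem norm_mul_deriv_div_le_of_mapsTo_ball {w : ℂ → ℂ} (hd : DifferentiableOn ℂ w (ball 0 1))
    (hw : MapsTo w (ball 0 1) (ball 0 1)) (hw0 : w 0 = 0) {β : ℝ} (hβ : -1 ≤ β) (hβ' : β ≤ 1)
    {r : ℝ} (hr : r < 1) {z : ℂ} (hz : ‖z‖ ≤ r) :
    ‖z * deriv (fun ζ ↦ (1 + β * w ζ) / (1 - w ζ)) z / ((1 + β * w z) / (1 - w z))‖ ≤
      (1 + β) * r / ((1 - r) * (1 + β * r)) := by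
  set ρ := ‖z‖
  set u := w z
  set s := ‖u‖
  have hρ : 0 ≤ ρ := norm_nonneg z
  have hρ1 : ρ < 1 := hz.trans_lt hr
  have hsρ : s ≤ ρ :=
    norm_le_norm_of_mapsTo_ball hd (hw.mono_right ball_subset_closedBall) hw0 hρ1
  have hs1 : s < 1 := hsρ.trans_lt hρ1
  have hβs : 0 < 1 + β * s := by nlinarith [norm_nonneg u]
  have hβρ : 0 < 1 + β * ρ := by nlinarith
  have hpick := norm_deriv_mul_le_of_mapsTo_ball hd hw hρ1
  have hlow := mul_le_norm_one_sub_mul_norm_one_add_mul hβ hβ' hs1.le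
  have hu1 : 1 - u ≠ 0 := sub_ne_zero.2 (ne_of_apply_ne norm (by rw [norm_one]; exact hs1.ne'))
  have hq := hasDerivAt_one_add_mul_div_one_sub (c := β)
    (hd.differentiableAt (isOpen_ball.mem_nhds (mem_ball_zero_iff.2 hρ1))).hasDerivAt
    (sub_ne_zero.1 hu1).symm
  rw [hq.deriv]
  have hnorm : ‖z * ((1 + β) * deriv w z / (1 - u) ^ 2) / ((1 + β * u) / (1 - u))‖ =
      (1 + β) * (ρ * ‖deriv w z‖) / (‖1 - u‖ * ‖1 + β * u‖) := by
    have : ‖1 - u‖ ≠ 0 := norm_ne_zero_iff.2 hu1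
    rw [norm_div, norm_mul, norm_div, norm_div, norm_mul, norm_pow, ← ofReal_one, ← ofReal_add,
      norm_real, Real.norm_of_nonneg (by linarith), ofReal_one]
    field_simp
    ring
  have hβ1 : 0 ≤ 1 + β := by linarith
  have hρ2 : 0 < 1 - ρ ^ 2 := by nlinarith
  have hderiv : ‖deriv w z‖ ≤ (1 - s ^ 2) / (1 - ρ ^ 2) := (le_div_iff₀ hρ2).2 hpick
  rw [hnorm]
  calc (1 + β) * (ρ * ‖deriv w z‖) / (‖1 - u‖ * ‖1 + β * u‖)
      ≤ (1 + β) * (ρ * ‖deriv w z‖) / ((1 - s) * (1 + β * s)) :=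
        div_le_div_of_nonneg_left (by positivity) (mul_pos (by linarith) hβs) hlow
    _ ≤ (1 + β) * (ρ * ((1 - s ^ 2) / (1 - ρ ^ 2))) / ((1 - s) * (1 + β * s)) := by
        gcongr (1 + β) * (ρ * ?_) / _
    _ = (1 + β) * (ρ / (1 - ρ ^ 2)) * ((1 + s) / (1 + β * s)) := by
        have : 1 - s ≠ 0 := (sub_pos.2 hs1).ne'
        field_simp
        ring
    _ ≤ (1 + β) * (ρ / (1 - ρ ^ 2)) * ((1 + ρ) / (1 + β * ρ)) :=
        mul_le_mul_of_nonneg_left (one_add_div_one_add_mul_le hβ' hβs hβρ hsρ) (by positivity)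
    _ = (1 + β) * (ρ / ((1 - ρ) * (1 + β * ρ))) := by
        have : 1 - ρ ≠ 0 := (sub_pos.2 hρ1).ne'
        field_simp
        ring
    _ ≤ (1 + β) * (r / ((1 - r) * (1 + β * r))) :=
        mul_le_mul_of_nonneg_left (div_one_sub_mul_one_add_mul_le hβ hρ hz hr) hβ1
    _ = (1 + β) * r / ((1 - r) * (1 + β * r)) := mul_div_assoc' _ _ _

theorem normSq_add_sub_normSq_sub_one (α : ℝ) (v : ℂ) :
    normSq (v + (1 - 2 * α : ℝ)) - normSq (v - 1) = 4 * (1 - α) * (v.re - α) := by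
  simp only [normSq_apply, add_re, add_im, sub_re, sub_im, ofReal_re, ofReal_im, one_re, one_im]
  ring

theorem norm_sub_one_lt_norm_add {α : ℝ} (hα : α < 1) {v : ℂ} (hv : α < v.re) :
    ‖v - 1‖ < ‖v + (1 - 2 * α : ℝ)‖ := by
  have h := normSq_add_sub_normSq_sub_one α v
  rw [norm_def, norm_def]
  exact Real.sqrt_lt_sqrt (normSq_nonneg _) (by nlinarith)

theorem exists_schwarz_of_re_gt {α : ℝ} (hα : α < 1) {p : ℂ → ℂ}
    (hp : DifferentiableOn ℂ p (ball 0 1)) (hp0 : p 0 = 1)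
    (hpre : ∀ z ∈ ball (0 : ℂ) 1, α < (p z).re) :
    ∃ w : ℂ → ℂ, DifferentiableOn ℂ w (ball 0 1) ∧ MapsTo w (ball 0 1) (ball 0 1) ∧ w 0 = 0 ∧
      ∀ z ∈ ball (0 : ℂ) 1, p z = (1 + (1 - 2 * α : ℝ) * w z) / (1 - w z) := by
  set β : ℂ := ((1 - 2 * α : ℝ) : ℂ)
  have hden : ∀ z ∈ ball (0 : ℂ) 1, p z + β ≠ 0 := fun z hz h ↦ by
    have := congrArg re h
    simp only [add_re, ofReal_re, zero_re, β] at this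
    linarith [hpre z hz]
  have hβ : 1 + β ≠ 0 := by
    rw [← ofReal_one, ← ofReal_add, ofReal_ne_zero]; linarith
  refine ⟨fun z ↦ (p z - 1) / (p z + β), (hp.sub_const 1).div (hp.add_const β) hden,
    fun z hz ↦ ?_, by simp [hp0], fun z hz ↦ ?_⟩
  · rw [mem_ball_zero_iff, norm_div, div_lt_one (norm_pos_iff.2 (hden z hz))]
    exact norm_sub_one_lt_norm_add hα (hpre z hz)
  · have hpz := hden z hz
    have h1w : 1 - (p z - 1) / (p z + β) = (1 + β) / (p z + β) := by field_simp; ring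
    have hβw : 1 + β * ((p z - 1) / (p z + β)) = p z * (1 + β) / (p z + β) := by field_simp; ring
    dsimp only
    rw [h1w, hβw]
    field_simp

theorem stmt_14_general (α : ℝ) (hα0 : 0 ≤ α) (hα1 : α < 1) (p : ℂ → ℂ)
    (hp : DifferentiableOn ℂ p (Metric.ball 0 1))
    (hp0 : p 0 = 1)
    (hpre : ∀ z ∈ Metric.ball (0:ℂ) 1, α < (p z).re)
    (r : ℝ) (hr1 : r < 1) :
    ∀ z : ℂ, ‖z‖ ≤ r →
      ‖z * deriv p z / p z‖ ≤
        2 * (1 - α) * r / ((1 - r) * (1 + (1 - 2*α) * r)) := by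
  intro z hz
  obtain ⟨w, hwd, hwm, hw0, hpw⟩ := exists_schwarz_of_re_gt hα1 hp hp0 hpre
  have hz1 : z ∈ ball (0 : ℂ) 1 := mem_ball_zero_iff.2 (hz.trans_lt hr1)
  have hpw' : p =ᶠ[𝓝 z] fun ζ ↦ (1 + (1 - 2 * α : ℝ) * w ζ) / (1 - w ζ) :=
    eventually_of_mem (isOpen_ball.mem_nhds hz1) hpw
  rw [hpw'.deriv_eq, hpw z hz1]
  convert norm_mul_deriv_div_le_of_mapsTo_ball hwd hwm hw0 (β := 1 - 2 * α) (by linarith)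
    (by linarith) hr1 hz using 2
  ring

theorem stmt_14 (α : ℝ) (hα0 : 0 ≤ α) (hα1 : α < 1) (p : ℂ → ℂ)
    (hp : DifferentiableOn ℂ p (Metric.ball 0 1))
    (hp0 : p 0 = 1)
    (hpre : ∀ z ∈ Metric.ball (0:ℂ) 1, α < (p z).re)
    (r : ℝ) (hr0 : 0 ≤ r) (hr1 : r < 1) :
    ∀ z : ℂ, ‖z‖ ≤ r →
      ‖z * deriv p z / p z‖ ≤
        2 * (1 - α) * r / ((1 - r) * (1 + (1 - 2*α) * r)) :=
  stmt_14_general α hα0 hα1 p hp hp0 hpre r hr1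
end
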